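/- arXiv:2505.24072 — 6 statements merged into one kernel-verified Lean document; each statement's English description precedes it below -/
import Mathlib

section
/- For integers k ≥ 2 and n ≥ k, the symmetric difference of any finite collection of (n-k+1)-flats in F_2^n is a [k,1]-avoider: no k-flat meets it in exactly one point. -/
/-- A `k`-flat in `𝔽₂ⁿ`: a coset of a `k`-dimensional linear subspace. -/
def IsFlat {n : ℕ} (k : ℕ) (F : Set (Fin n → ZMod 2)) : Prop :=
  ∃ (W : Submodule (ZMod 2) (Fin n → ZMod 2)) (v : Fin n → ZMod 2),
    Module.finrank (ZMod 2) W = k ∧ F = {x | x - v ∈ W}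

/-- The symmetric difference of a finite family of sets: points lying in an odd
number of the sets. -/
def symmDiffFam {n a : ℕ} (S : Fin a → Set (Fin n → ZMod 2)) : Set (Fin n → ZMod 2) :=
  {x | Odd {i : Fin a | x ∈ S i}.ncard}

open Classical

/-- A flat of dimension `n-k+1` meets a `k`-flat in an even number of points. -/
lemma flat_inter_even {n k : ℕ} (hk : 2 ≤ k) (hkn : k ≤ n)
    (T F : Set (Fin n → ZMod 2)) (hT : IsFlat (n - k + 1) T) (hF : IsFlat k F) :
    Even (T ∩ F).ncard := by
  obtain ⟨W, w, hWrank, rfl⟩ := hT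
  obtain ⟨V, v, hVrank, rfl⟩ := hF
  rcases Set.eq_empty_or_nonempty ({x | x - w ∈ W} ∩ {x | x - v ∈ V}) with h | ⟨p, hp1, hp2⟩
  · simp [h]
  · simp only [Set.mem_setOf_eq] at hp1 hp2
    have hcoset : {x | x - w ∈ W} ∩ {x | x - v ∈ V}
        = (p + ·) '' ((W ⊓ V : Submodule (ZMod 2) _) : Set _) := by
      ext x
      simp only [Set.mem_inter_iff, Set.mem_setOf_eq, Set.mem_image, Submodule.mem_inf,
        SetLike.mem_coe]
      constructor
      · rintro ⟨h1, h2⟩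
        refine ⟨x - p, ⟨?_, ?_⟩, by abel⟩
        · have := W.sub_mem h1 hp1
          convert this using 1; abel
        · have := V.sub_mem h2 hp2
          convert this using 1; abel
      · rintro ⟨y, ⟨hy1, hy2⟩, rfl⟩
        constructor
        · have := W.add_mem hy1 hp1
          show p + y - w ∈ W
          convert this using 1; abel
        · have := V.add_mem hy2 hp2
          show p + y - v ∈ V
          convert this using 1; abel
    rw [hcoset, Set.ncard_image_of_injective _ (add_right_injective p)]
    have hcard : (((W ⊓ V : Submodule (ZMod 2) (Fin n → ZMod 2))) : Set (Fin n → ZMod 2)).ncard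
        = 2 ^ Module.finrank (ZMod 2) (W ⊓ V : Submodule (ZMod 2) _) := by
      have h1 : (((W ⊓ V : Submodule (ZMod 2) (Fin n → ZMod 2))) : Set (Fin n → ZMod 2)).ncard
          = Nat.card (W ⊓ V : Submodule (ZMod 2) _) := by
        rw [← Nat.card_coe_set_eq]; rfl
      rw [h1, Nat.card_eq_fintype_card]
      have := Module.card_eq_pow_finrank (K := ZMod 2) (V := ↥(W ⊓ V))
      simpa using this
    rw [hcard]
    have hrank : 1 ≤ Module.finrank (ZMod 2) (W ⊓ V : Submodule (ZMod 2) _) := by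
      have hsum := Submodule.finrank_sup_add_finrank_inf_eq W V
      have hle : Module.finrank (ZMod 2) (W ⊔ V : Submodule (ZMod 2) _) ≤ n := by
        have := Submodule.finrank_le (W ⊔ V)
        rwa [Module.finrank_fin_fun] at this
      omega
    exact (Nat.even_pow' (by omega)).mpr even_two

/-- For `k ≥ 2`, `n ≥ k`, the symmetric difference of finitely many
`(n-k+1)`-flats is a `[k,1]`-avoider. -/
theorem symmDiff_flats_avoider {n k a : ℕ} (hk : 2 ≤ k) (hkn : k ≤ n)
    (S : Fin a → Set (Fin n → ZMod 2)) (hS : ∀ i, IsFlat (n - k + 1) (S i)) :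
    ∀ F, IsFlat k F → ((symmDiffFam S) ∩ F).ncard ≠ 1 := by
  intro F hF
  suffices h : Even ((symmDiffFam S ∩ F).ncard) by
    intro h1; rw [h1] at h; exact (Nat.not_even_iff_odd.mpr odd_one) h
  have hFt : F.Finite := Set.toFinite F
  -- work in ZMod 2
  have hzero : (((symmDiffFam S ∩ F).ncard : ZMod 2)) = 0 := by
    have e1 : ((symmDiffFam S ∩ F).ncard : ZMod 2)
        = ∑ x ∈ F.toFinset, ∑ i : Fin a, (if x ∈ S i then (1 : ZMod 2) else 0) := by
      have inner : ∀ x : Fin n → ZMod 2,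
          (∑ i : Fin a, (if x ∈ S i then (1 : ZMod 2) else 0))
            = ({i : Fin a | x ∈ S i}.ncard : ZMod 2) := by
        intro x
        rw [Set.ncard_eq_toFinset_card', Set.toFinset_setOf, Finset.card_filter]
        push_cast
        rfl
      calc ((symmDiffFam S ∩ F).ncard : ZMod 2)
          = ((F.toFinset.filter (· ∈ symmDiffFam S)).card : ZMod 2) := by
            rw [Set.ncard_eq_toFinset_card', Set.toFinset_inter]
            congr 2
            ext x
            simp [Finset.mem_filter, and_comm]
        _ = ∑ x ∈ F.toFinset, (if x ∈ symmDiffFam S then (1 : ZMod 2) else 0) := by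
            rw [Finset.card_filter]; push_cast; rfl
        _ = ∑ x ∈ F.toFinset, ({i : Fin a | x ∈ S i}.ncard : ZMod 2) := by
            refine Finset.sum_congr rfl fun x _ => ?_
            by_cases hx : x ∈ symmDiffFam S
            · have hodd : Odd {i : Fin a | x ∈ S i}.ncard := hx
              rw [if_pos hx]
              obtain ⟨m, hm⟩ := hodd
              rw [hm]; push_cast; simp [show (2:ZMod 2) = 0 from rfl, CharTwo.add_self_eq_zero]
            · have heven : Even {i : Fin a | x ∈ S i}.ncard :=
                Nat.not_odd_iff_even.mp hx
              rw [if_neg hx]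
              obtain ⟨m, hm⟩ := heven
              rw [hm]; push_cast; simp [show (2:ZMod 2) = 0 from rfl, CharTwo.add_self_eq_zero]
        _ = ∑ x ∈ F.toFinset, ∑ i : Fin a, (if x ∈ S i then (1 : ZMod 2) else 0) := by
            exact Finset.sum_congr rfl fun x _ => (inner x).symm
    rw [e1, Finset.sum_comm]
    have e2 : ∀ i : Fin a,
        (∑ x ∈ F.toFinset, (if x ∈ S i then (1 : ZMod 2) else 0)) = 0 := by
      intro i
      have : (∑ x ∈ F.toFinset, (if x ∈ S i then (1 : ZMod 2) else 0))
          = (((S i) ∩ F).ncard : ZMod 2) := by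
        have hfe : (S i ∩ F).toFinset = F.toFinset.filter (· ∈ S i) := by
          ext x; simp [and_comm]
        rw [Set.ncard_eq_toFinset_card', hfe, Finset.card_filter]
        push_cast
        rfl
      rw [this]
      obtain ⟨m, hm⟩ := flat_inter_even hk hkn (S i) F (hS i) hF
      rw [hm]; push_cast; simp [show (2:ZMod 2) = 0 from rfl, CharTwo.add_self_eq_zero]
    simp [e2]
  have := (ZMod.natCast_eq_zero_iff _ 2).mp hzero
  exact even_iff_two_dvd.mpr this
end

section
/- Let H = (V, E) be a hypergraph with vertex set V = {1,...,n} and every hyperedge of cardinality at most k-1, where k ≥ 3 and k ≤ n+1. Then there exists a [k,1]-avoider S_H ⊆ F_2^n with |S_H| = 2^n − i(H), where i(H) is the number of independent sets of H. Concretely, S_H is the set of vectors x ∈ F_2^n such that some edge e ∈ E has x_v = 1 for all v ∈ e. -/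
open Finset

/-- From a hypergraph on `[n]` with all edges of size at most `k-1` (`3 ≤ k ≤ n+1`),
the set `S_H` of vectors covering some edge by ones is a `[k,1]`-avoider of size
`2^n - i(H)`, where `i(H)` is the number of independent sets of the hypergraph. -/
theorem hypergraph_avoider {n k : ℕ} (hk : 3 ≤ k) (hkn : k ≤ n + 1)
    (E : Finset (Finset (Fin n))) (hE : ∀ e ∈ E, e.card ≤ k - 1) :
    ∃ S : Set (Fin n → ZMod 2),
      S = {x | ∃ e ∈ E, ∀ v ∈ e, x v = 1} ∧
      (∀ F, IsFlat k F → (S ∩ F).ncard ≠ 1) ∧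
      S.ncard = 2 ^ n -
        (Finset.univ.filter (fun W : Finset (Fin n) => ∀ e ∈ E, ¬ e ⊆ W)).card := by
  classical
  refine ⟨{x | ∃ e ∈ E, ∀ v ∈ e, x v = 1}, rfl, ?_, ?_⟩
  · rintro F ⟨W, v, hW, rfl⟩ h1
    rw [Set.ncard_eq_one] at h1
    obtain ⟨x, hx⟩ := h1
    have hxmem : x ∈ ({x | ∃ e ∈ E, ∀ v ∈ e, x v = 1} ∩ {x | x - v ∈ W}) := by
      rw [hx]; exact rfl
    obtain ⟨⟨e, heE, hxe⟩, hxF⟩ := hxmem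
    set f : W →ₗ[ZMod 2] (e → ZMod 2) :=
      (LinearMap.funLeft (ZMod 2) (ZMod 2) (fun i : e => (i : Fin n))).comp W.subtype with hf
    have hnotinj : ¬ Function.Injective f := by
      intro hinj
      have hle := LinearMap.finrank_le_finrank_of_injective hinj
      rw [hW, Module.finrank_pi, Fintype.card_coe] at hle
      have := hE e heE
      omega
    rw [Function.not_injective_iff] at hnotinj
    obtain ⟨w₁, w₂, hfw, hne⟩ := hnotinj
    set w : W := w₁ - w₂ with hwdef
    have hwne : (w : Fin n → ZMod 2) ≠ 0 := by
      intro h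
      apply hne
      have : w = 0 := Subtype.ext h
      rw [hwdef, sub_eq_zero] at this
      exact this
    have hwe : ∀ u ∈ e, (w : Fin n → ZMod 2) u = 0 := by
      intro u hu
      have : f w = 0 := by rw [hwdef, map_sub, hfw, sub_self]
      have := congrFun this ⟨u, hu⟩
      simpa [hf, LinearMap.funLeft] using this
    have hmem : x + (w : Fin n → ZMod 2) ∈
        ({x | ∃ e ∈ E, ∀ v ∈ e, x v = 1} ∩ {x | x - v ∈ W}) := by
      constructor
      · exact ⟨e, heE, fun u hu => by rw [Pi.add_apply, hxe u hu, hwe u hu, add_zero]⟩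
      · have : x + (w : Fin n → ZMod 2) - v = (x - v) + w := by ring
        rw [Set.mem_setOf_eq, this]
        exact W.add_mem hxF w.2
    rw [hx, Set.mem_singleton_iff] at hmem
    exact hwne (add_eq_left.mp hmem)
  · have hcard : Nat.card (Fin n → ZMod 2) = 2 ^ n := by
      simp [Nat.card_eq_fintype_card]
    have hcompl : {x : Fin n → ZMod 2 | ∃ e ∈ E, ∀ v ∈ e, x v = 1}ᶜ
        = ↑(univ.filter fun x : Fin n → ZMod 2 =>
            ∀ e ∈ E, ¬ e ⊆ univ.filter (fun v => x v = 1)) := by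
      ext x
      simp only [Set.mem_compl_iff, Set.mem_setOf_eq, coe_filter, mem_univ, true_and]
      push_neg
      constructor
      · intro h e he
        rw [Finset.not_subset]
        obtain ⟨v, hv, hv1⟩ := h e he
        exact ⟨v, hv, by simp [hv1]⟩
      · intro h e he
        obtain ⟨v, hv, hv1⟩ := Finset.not_subset.mp (h e he)
        exact ⟨v, hv, by simpa using hv1⟩
    have key := Set.ncard_add_ncard_compl {x : Fin n → ZMod 2 | ∃ e ∈ E, ∀ v ∈ e, x v = 1}
    rw [hcompl, Set.ncard_coe_finset, hcard] at key
    have hbij : (univ.filter fun x : Fin n → ZMod 2 =>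
            ∀ e ∈ E, ¬ e ⊆ univ.filter (fun v => x v = 1)).card
        = (univ.filter (fun W : Finset (Fin n) => ∀ e ∈ E, ¬ e ⊆ W)).card := by
      apply Finset.card_bij (fun x _ => univ.filter (fun v => x v = 1))
      · intro x hx
        simp only [mem_filter, mem_univ, true_and] at hx ⊢
        exact hx
      · intro x hx y hy h
        funext v
        have h01 : ∀ a : ZMod 2, a = 0 ∨ a = 1 := by decide
        have := Finset.ext_iff.mp h v
        simp only [mem_filter, mem_univ, true_and] at this
        rcases h01 (x v) with h1 | h1 <;> rcases h01 (y v) with h2 | h2 <;>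
          simp_all
      · intro Wset hW
        have hset : (univ.filter (fun v => (if v ∈ Wset then (1:ZMod 2) else 0) = 1)) = Wset := by
          ext v
          simp only [mem_filter, mem_univ, true_and]
          split
          · simp_all
          · simp_all
        refine ⟨fun v => if v ∈ Wset then 1 else 0, ?_, hset⟩
        simp only [mem_filter, mem_univ, true_and] at hW ⊢
        rw [hset]
        exact hW
    exact Nat.eq_sub_of_add_eq (hbij ▸ key)
end

section
/- Fix integers k ≥ 3 and ℓ ≥ 1, let n = ℓ(k-1), and let C ≤ F_2^ℓ be a binary linear code. Partition the n coordinates into ℓ consecutive blocks of size k-1; for x ∈ F_2^n define its signature s(x) ∈ F_2^ℓ by s(x)_i = 1 iff all coordinates of x in block i equal 1. Let S = {x ∈ F_2^n : s(x) ∉ C}. Then S is a [k,1]-avoider and |S| = 2^n − W_C(1, 2^{k-1} − 1), where W_C(x,y) = Σ_{c∈C} x^{w(c)} y^{ℓ−w(c)} is the weight enumerator of C. -/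
open scoped Classical

/-- Hamming weight of a binary vector. -/
def wt {m : ℕ} (c : Fin m → ZMod 2) : ℕ :=
  (Finset.univ.filter (fun i => c i ≠ 0)).card

/-- The signature of `x ∈ 𝔽₂^{ℓ(k-1)}`: its `i`-th entry is `1` iff all
coordinates of `x` in the `i`-th block of `k-1` consecutive coordinates equal `1`. -/
noncomputable def sig (ℓ k : ℕ) (x : Fin (ℓ * (k - 1)) → ZMod 2) : Fin ℓ → ZMod 2 :=
  fun i => if (∀ j : Fin (ℓ * (k - 1)),
      (i : ℕ) * (k - 1) ≤ (j : ℕ) ∧ (j : ℕ) < ((i : ℕ) + 1) * (k - 1) → x j = 1)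
    then 1 else 0

lemma sig_eq_one_iff {ℓ k : ℕ} (x : Fin (ℓ * (k - 1)) → ZMod 2) (i : Fin ℓ) :
    sig ℓ k x i = 1 ↔ ∀ j : Fin (ℓ * (k - 1)),
      (i : ℕ) * (k - 1) ≤ (j : ℕ) ∧ (j : ℕ) < ((i : ℕ) + 1) * (k - 1) → x j = 1 := by
  unfold sig
  split_ifs with h
  · simpa using h
  · simpa using h

lemma zmod2_add_self {N : ℕ} (w : Fin N → ZMod 2) : w + w = 0 := by
  funext j
  have : ∀ a : ZMod 2, a + a = 0 := by decide
  exact this (w j)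

lemma exists_w0 {ℓ k : ℕ} (hk : 3 ≤ k) (W : Submodule (ZMod 2) (Fin (ℓ * (k - 1)) → ZMod 2))
    (hW : Module.finrank (ZMod 2) W = k) (i : Fin ℓ) :
    ∃ w₀ : Fin (ℓ * (k - 1)) → ZMod 2, w₀ ∈ W ∧ w₀ ≠ 0 ∧
      ∀ j : Fin (ℓ * (k - 1)),
        (i : ℕ) * (k - 1) ≤ (j : ℕ) ∧ (j : ℕ) < ((i : ℕ) + 1) * (k - 1) → w₀ j = 0 := by
  set p : Fin (ℓ * (k - 1)) → Prop := fun j =>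
    (i : ℕ) * (k - 1) ≤ (j : ℕ) ∧ (j : ℕ) < ((i : ℕ) + 1) * (k - 1) with hp
  let ψ : W →ₗ[ZMod 2] ({j // p j} → ZMod 2) :=
    (LinearMap.funLeft (ZMod 2) (ZMod 2) (fun j : {j // p j} => (j : Fin (ℓ * (k - 1))))).comp
      W.subtype
  have hcardB : Fintype.card {j // p j} ≤ k - 1 := by
    have hinj : Function.Injective (fun j : {j // p j} =>
        (⟨(j : Fin (ℓ * (k - 1))) - (i : ℕ) * (k - 1), by
          obtain ⟨⟨j, hjl⟩, hj1, hj2⟩ := j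
          simp only [Fin.mk.injEq] at hj1 hj2
          have : ((i : ℕ) + 1) * (k - 1) = (i : ℕ) * (k - 1) + (k - 1) := by ring
          simp only [Fin.val_mk]
          omega⟩ : Fin (k - 1))) := by
      rintro ⟨⟨j1, hl1⟩, ha1, hb1⟩ ⟨⟨j2, hl2⟩, ha2, hb2⟩ h
      simp only [Fin.mk.injEq] at h ha1 hb1 ha2 hb2 ⊢
      apply Subtype.ext
      apply Fin.ext
      simp only [Fin.val_mk]
      omega
    simpa using Fintype.card_le_of_injective _ hinj
  have hne : LinearMap.ker ψ ≠ ⊥ := by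
    intro hbot
    have hinj : Function.Injective ψ := LinearMap.ker_eq_bot.1 hbot
    have h1 := LinearMap.finrank_le_finrank_of_injective hinj
    rw [hW, Module.finrank_pi] at h1
    omega
  obtain ⟨w₀, hw₀ker, hw₀ne⟩ := (Submodule.ne_bot_iff _).1 hne
  refine ⟨(w₀ : Fin (ℓ * (k - 1)) → ZMod 2), w₀.2, ?_, ?_⟩
  · simpa using hw₀ne
  · intro j hj
    have := LinearMap.mem_ker.1 hw₀ker
    have h2 := congrFun this ⟨j, hj⟩
    simpa [ψ, LinearMap.funLeft] using h2

lemma sum_sig_zero {ℓ k : ℕ} (hk : 3 ≤ k) (W : Submodule (ZMod 2) (Fin (ℓ * (k - 1)) → ZMod 2))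
    (hW : Module.finrank (ZMod 2) W = k) (v : Fin (ℓ * (k - 1)) → ZMod 2) (i : Fin ℓ) :
    ∑ y ∈ Finset.univ.filter (fun y => y - v ∈ W), sig ℓ k y i = 0 := by
  obtain ⟨w₀, hw₀W, hw₀ne, hw₀z⟩ := exists_w0 hk W hW i
  have hsig : ∀ y, sig ℓ k (y + w₀) i = sig ℓ k y i := by
    intro y
    unfold sig
    congr 1
    apply propext
    constructor
    · intro h j hj
      have h1 := h j hj
      have h2 := hw₀z j hj
      simpa [h2] using h1
    · intro h j hj
      have h2 := hw₀z j hj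
      simp [h j hj, h2]
  refine Finset.sum_involution (fun y _ => y + w₀) ?_ ?_ ?_ ?_
  · intro y _
    rw [hsig]
    have : ∀ a : ZMod 2, a + a = 0 := by decide
    exact this _
  · intro y _ _
    intro h
    apply hw₀ne
    have := add_left_cancel (a := y) (b := w₀) (c := 0) (by simpa using h)
    exact this
  · intro y hy
    simp only [Finset.mem_filter, Finset.mem_univ, true_and] at hy ⊢
    have : y + w₀ - v = (y - v) + w₀ := by ring
    rw [this]
    exact W.add_mem hy hw₀W
  · intro y _
    show y + w₀ + w₀ = y
    rw [add_assoc, zmod2_add_self, add_zero]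

lemma avoider_part {k ℓ : ℕ} (hk : 3 ≤ k) (C : Submodule (ZMod 2) (Fin ℓ → ZMod 2)) :
    ∀ F, IsFlat k F → ({x | sig ℓ k x ∉ C} ∩ F).ncard ≠ 1 := by
  rintro F ⟨W, v, hW, rfl⟩ hcard
  rw [Set.ncard_eq_one] at hcard
  obtain ⟨x, hx⟩ := hcard
  have hxm : x ∈ ({x | sig ℓ k x ∉ C} ∩ {x | x - v ∈ W}) := by rw [hx]; rfl
  have hxS : sig ℓ k x ∉ C := hxm.1
  have hxF : x - v ∈ W := hxm.2
  set FS : Finset (Fin (ℓ * (k - 1)) → ZMod 2) :=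
    Finset.univ.filter (fun y => y - v ∈ W) with hFS
  have hsum0 : ∑ y ∈ FS, sig ℓ k y = 0 := by
    funext i
    rw [Finset.sum_apply]
    exact sum_sig_zero hk W hW v i
  have hxFS : x ∈ FS := Finset.mem_filter.2 ⟨Finset.mem_univ _, hxF⟩
  have hrest : ∀ y ∈ FS.erase x, sig ℓ k y ∈ C := by
    intro y hy
    obtain ⟨hyne, hyFS⟩ := Finset.mem_erase.1 hy
    by_contra h
    have hymem : y ∈ ({x | sig ℓ k x ∉ C} ∩ {x | x - v ∈ W}) :=
      ⟨h, (Finset.mem_filter.1 hyFS).2⟩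
    rw [hx] at hymem
    exact hyne hymem
  have hC : ∑ y ∈ FS.erase x, sig ℓ k y ∈ C := Submodule.sum_mem _ hrest
  have hkey : sig ℓ k x + ∑ y ∈ FS.erase x, sig ℓ k y = 0 := by
    rw [Finset.add_sum_erase _ _ hxFS, hsum0]
  have : sig ℓ k x = -(∑ y ∈ FS.erase x, sig ℓ k y) := eq_neg_of_add_eq_zero_left hkey
  exact hxS (this ▸ C.neg_mem hC)

lemma sig_char {ℓ k : ℕ} (x : Fin (ℓ * (k - 1)) → ZMod 2) (i : Fin ℓ) :
    sig ℓ k x i = 1 ↔ ∀ r : Fin (k - 1), x (finProdFinEquiv (i, r)) = 1 := by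
  rw [sig_eq_one_iff]
  have e1 : ((i : ℕ) + 1) * (k - 1) = (i : ℕ) * (k - 1) + (k - 1) := by ring
  have e2 : (k - 1) * (i : ℕ) = (i : ℕ) * (k - 1) := Nat.mul_comm _ _
  constructor
  · intro h r
    apply h
    have hv : ((finProdFinEquiv (i, r) : Fin (ℓ * (k - 1))) : ℕ)
        = (r : ℕ) + (k - 1) * (i : ℕ) := by simp
    have hr := r.2
    omega
  · intro h j hj
    have hrlt : (j : ℕ) - (i : ℕ) * (k - 1) < k - 1 := by omega
    have hje : finProdFinEquiv (i, (⟨(j : ℕ) - (i : ℕ) * (k - 1), hrlt⟩ : Fin (k - 1))) = j := by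
      apply Fin.ext
      have hv : ((finProdFinEquiv (i, (⟨(j : ℕ) - (i : ℕ) * (k - 1), hrlt⟩ : Fin (k - 1))) :
          Fin (ℓ * (k - 1))) : ℕ) = ((j : ℕ) - (i : ℕ) * (k - 1)) + (k - 1) * (i : ℕ) := by simp
      omega
    rw [← hje]
    exact h _

lemma percard {k : ℕ} (b : ZMod 2) :
    Nat.card {f : Fin (k - 1) → ZMod 2 // (∀ r, f r = 1) ↔ b = 1}
      = if b = 1 then 1 else 2 ^ (k - 1) - 1 := by
  have hone : Nat.card {f : Fin (k - 1) → ZMod 2 // ∀ r, f r = 1} = 1 := by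
    rw [Nat.card_eq_one_iff_unique]
    constructor
    · constructor
      rintro ⟨f, hf⟩ ⟨g, hg⟩
      apply Subtype.ext
      funext r
      show f r = g r
      rw [hf r, hg r]
    · exact ⟨⟨fun _ => 1, fun _ => rfl⟩⟩
  split_ifs with hb
  · rw [Nat.card_congr (Equiv.subtypeEquivRight (q := fun f => ∀ r, f r = 1)
      (fun f => by simp [hb]))]
    exact hone
  · rw [Nat.card_congr (Equiv.subtypeEquivRight (q := fun f => ¬ ∀ r, f r = 1)
      (fun f => by simp [hb]))]
    rw [Nat.card_eq_fintype_card, Fintype.card_subtype_compl]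
    rw [← Nat.card_eq_fintype_card (α := {f : Fin (k-1) → ZMod 2 // ∀ r, f r = 1}), hone]
    congr 1
    rw [Fintype.card_fun, ZMod.card, Fintype.card_fin]

lemma fiber_card {ℓ k : ℕ} (s : Fin ℓ → ZMod 2) :
    Nat.card {x : Fin (ℓ * (k - 1)) → ZMod 2 // sig ℓ k x = s}
      = (2 ^ (k - 1) - 1) ^ (ℓ - wt s) := by
  let e : (Fin (ℓ * (k - 1)) → ZMod 2) ≃ (Fin ℓ → Fin (k - 1) → ZMod 2) :=
    (Equiv.arrowCongr finProdFinEquiv (Equiv.refl (ZMod 2))).symm.trans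
      (Equiv.curry _ _ _)
  have key : ∀ x, (sig ℓ k x = s) ↔ (∀ i, ((∀ r, e x i r = 1) ↔ s i = 1)) := by
    intro x
    rw [funext_iff]
    apply forall_congr'
    intro i
    have h2 : ∀ a b : ZMod 2, a = b ↔ (a = 1 ↔ b = 1) := by decide
    rw [h2 (sig ℓ k x i) (s i), sig_char x i]
    exact Iff.rfl
  have e2 : {x : Fin (ℓ * (k - 1)) → ZMod 2 // sig ℓ k x = s}
      ≃ ∀ i : Fin ℓ, {f : Fin (k - 1) → ZMod 2 // (∀ r, f r = 1) ↔ s i = 1} :=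
    (Equiv.subtypeEquiv (q := fun g : Fin ℓ → Fin (k - 1) → ZMod 2 =>
        ∀ i, ((∀ r, g i r = 1) ↔ s i = 1)) e key).trans
      (Equiv.subtypePiEquivPi (p := fun i (f : Fin (k - 1) → ZMod 2) =>
        ((∀ r, f r = 1) ↔ s i = 1)))
  rw [Nat.card_congr e2, Nat.card_pi]
  have hper : ∀ i : Fin ℓ,
      Nat.card {f : Fin (k - 1) → ZMod 2 // (∀ r, f r = 1) ↔ s i = 1}
        = if s i = 1 then 1 else 2 ^ (k - 1) - 1 := fun i => percard (s i)
  rw [Finset.prod_congr rfl (fun i _ => hper i), Finset.prod_ite, Finset.prod_const_one,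
    Finset.prod_const, one_mul]
  congr 1
  have hfe : (Finset.univ.filter (fun i => ¬ s i = 1))
      = (Finset.univ.filter (fun i => ¬ s i ≠ 0)) := by
    apply Finset.filter_congr
    intro i _
    have : ∀ a : ZMod 2, (¬ a = 1) ↔ ¬ a ≠ 0 := by decide
    exact this (s i)
  rw [hfe, Finset.filter_not, Finset.card_sdiff_of_subset (Finset.filter_subset _ _)]
  simp [wt]

lemma count_in {ℓ k : ℕ} (C : Submodule (ZMod 2) (Fin ℓ → ZMod 2)) :
    Nat.card {x : Fin (ℓ * (k - 1)) → ZMod 2 // sig ℓ k x ∈ C}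
      = ∑ c : C, (2 ^ (k - 1) - 1) ^ (ℓ - wt (c : Fin ℓ → ZMod 2)) := by
  have E : (Σ c : C, {x : Fin (ℓ * (k - 1)) → ZMod 2 // sig ℓ k x = (c : Fin ℓ → ZMod 2)})
      ≃ {x : Fin (ℓ * (k - 1)) → ZMod 2 // sig ℓ k x ∈ C} :=
    { toFun := fun p => ⟨p.2.1, by rw [p.2.2]; exact p.1.2⟩
      invFun := fun x => ⟨⟨sig ℓ k x.1, x.2⟩, x.1, rfl⟩
      left_inv := by
        rintro ⟨⟨c, hc⟩, x, hx⟩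
        simp only at hx
        subst hx
        rfl
      right_inv := fun x => rfl }
  rw [← Nat.card_congr E, Nat.card_eq_fintype_card, Fintype.card_sigma]
  exact Finset.sum_congr rfl (fun c _ => by
    rw [← Nat.card_eq_fintype_card, fiber_card])

/-- Code-based construction: for `k ≥ 3`, `ℓ ≥ 1`, `n = ℓ(k-1)` and a binary linear
code `C ≤ 𝔽₂^ℓ`, the set `S = {x : s(x) ∉ C}` is a `[k,1]`-avoider of size
`2^n - W_C(1, 2^{k-1} - 1)`. -/
theorem code_based_avoider {k ℓ : ℕ} (hk : 3 ≤ k) (hl : 1 ≤ ℓ)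
    (C : Submodule (ZMod 2) (Fin ℓ → ZMod 2)) :
    (∀ F, IsFlat k F → ({x | sig ℓ k x ∉ C} ∩ F).ncard ≠ 1) ∧
    {x : Fin (ℓ * (k - 1)) → ZMod 2 | sig ℓ k x ∉ C}.ncard
      = 2 ^ (ℓ * (k - 1)) - ∑ c : C, (2 ^ (k - 1) - 1) ^ (ℓ - wt (c : Fin ℓ → ZMod 2)) := by
  refine ⟨avoider_part hk C, ?_⟩
  rw [← Nat.card_coe_set_eq]
  have hcoe : Nat.card ↥{x : Fin (ℓ * (k - 1)) → ZMod 2 | sig ℓ k x ∉ C}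
      = Nat.card {x : Fin (ℓ * (k - 1)) → ZMod 2 // sig ℓ k x ∉ C} := rfl
  rw [hcoe, Nat.card_eq_fintype_card, Fintype.card_subtype_compl,
    ← Nat.card_eq_fintype_card (α := {x : Fin (ℓ * (k - 1)) → ZMod 2 // sig ℓ k x ∈ C}),
    count_in, Fintype.card_fun, ZMod.card, Fintype.card_fin]
end

section
/- Let a, b, ℓ be integers with b > |a| and ℓ ≥ 1. Then the number of distinct values W_C(a,b), as C ranges over binary linear codes of length ℓ, is at most (ℓ+1) · (2b / gcd(b−a, b+a))^ℓ. -/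
open scoped Classical

/-- The weight enumerator of a binary linear code evaluated at integers `(x, y)`:
`W_C(x,y) = Σ_{c ∈ C} x^{w(c)} y^{ℓ - w(c)}`. -/
noncomputable def WE {m : ℕ} (C : Submodule (ZMod 2) (Fin m → ZMod 2)) (x y : ℤ) : ℤ :=
  ∑ c : C, x ^ wt (c : Fin m → ZMod 2) * y ^ (m - wt (c : Fin m → ZMod 2))

/-
MacWilliams gives `2^e · W_C(a,b) = W_{C^⊥}(b-a, b+a)` with `e = dim C^⊥ ≤ ℓ`. Writing
`g = gcd(b-a, b+a)`, `u = (b-a)/g`, `w = (b+a)/g`, homogeneity turns the right side into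
`g^ℓ · W_{C^⊥}(u,w)`, and since `u, w > 0` the integer `W_{C^⊥}(u,w)` lies between `1` and
`W_{F_2^ℓ}(u,w) = (u+w)^ℓ = (2b/g)^ℓ`. So `W_C(a,b)` is determined by a pair
`(e, W_{C^⊥}(u,w))` taken from a set of size `(ℓ+1)(2b/g)^ℓ`.
-/

lemma Set.ncard_le_card_of_subset_image {α β : Type*} {s : Set β} {f : α → β} {T : Finset α}
    (h : s ⊆ f '' T) : s.ncard ≤ T.card :=
  calc s.ncard ≤ (f '' T).ncard := Set.ncard_le_ncard h (T.finite_toSet.image f)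
    _ ≤ T.card := (Set.ncard_image_le T.finite_toSet).trans_eq (Set.ncard_coe_finset T)

lemma AddChar.map_sum_eq_prod {ι A M : Type*} [AddCommMonoid A] [CommMonoid M]
    (ψ : AddChar A M) (s : Finset ι) (f : ι → A) :
    ψ (∑ i ∈ s, f i) = ∏ i ∈ s, ψ (f i) := by
  induction s using Finset.cons_induction with
  | empty => simp
  | cons i s hi ih => rw [Finset.sum_cons, Finset.prod_cons, map_add_eq_mul, ih]

lemma dotProductBilin_isRefl {K ι : Type*} [CommSemiring K] [Fintype ι] :
    LinearMap.BilinForm.IsRefl (dotProductBilin K K : LinearMap.BilinForm K (ι → K)) := by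
  intro x y h
  simpa [dotProduct_comm] using h

lemma dotProductBilin_nondegenerate {K ι : Type*} [CommSemiring K] [Fintype ι] :
    LinearMap.BilinForm.Nondegenerate (dotProductBilin K K : LinearMap.BilinForm K (ι → K)) := by
  constructor <;> intro x hx <;> funext j
  · simpa using hx (Pi.single j 1)
  · simpa using hx (Pi.single j 1)

section DualCode

variable {K ι : Type*} [Field K] [Fintype ι]

def dualCode (C : Submodule K (ι → K)) : Submodule K (ι → K) :=
  LinearMap.BilinForm.orthogonal (dotProductBilin K K) C

lemma mem_dualCode {C : Submodule K (ι → K)} {v : ι → K} :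
    v ∈ dualCode C ↔ ∀ c ∈ C, c ⬝ᵥ v = 0 :=
  LinearMap.BilinForm.mem_orthogonal_iff

lemma dualCode_dualCode (C : Submodule K (ι → K)) : dualCode (dualCode C) = C :=
  LinearMap.BilinForm.orthogonal_orthogonal dotProductBilin_nondegenerate dotProductBilin_isRefl C

end DualCode

def signChar : AddChar (ZMod 2) ℤ := AddChar.zmodChar 2 neg_one_sq

@[simp] lemma signChar_zero : signChar 0 = 1 := rfl

@[simp] lemma signChar_one : signChar 1 = -1 := rfl

lemma signChar_eq_one_iff {t : ZMod 2} : signChar t = 1 ↔ t = 0 := by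
  revert t; decide

lemma sum_signChar_mul_mul_ite (s : ZMod 2) (x y : ℤ) :
    ∑ t : ZMod 2, signChar (s * t) * (if t = 0 then y else x) =
      if s = 0 then y + x else y - x := by
  rw [show ∀ f : ZMod 2 → ℤ, ∑ t, f t = f 0 + f 1 from Fin.sum_univ_two]
  obtain rfl | rfl : s = 0 ∨ s = 1 := by revert s; decide
  · simp
  · simp [sub_eq_add_neg]

lemma sum_signChar_dotProduct_eq_ite {ι : Type*} [Fintype ι] [DecidableEq ι]
    (C : Submodule (ZMod 2) (ι → ZMod 2)) (v : ι → ZMod 2) :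
    ∑ c : C, signChar ((c : ι → ZMod 2) ⬝ᵥ v) =
      if v ∈ dualCode C then (Fintype.card C : ℤ) else 0 := by
  let ψ : AddChar C ℤ := signChar.compAddMonoidHom
    (((dotProductBilin (ZMod 2) (ZMod 2)).flip v ∘ₗ C.subtype).toAddMonoidHom)
  have hψ : ψ = 0 ↔ v ∈ dualCode C := by
    simp [ψ, AddChar.ext_iff, signChar_eq_one_iff, mem_dualCode]
  simpa [ψ, hψ] using AddChar.sum_eq_ite ψ

section WeightEnumerator

variable {m : ℕ}

lemma pow_wt_mul_pow_sub_wt {M : Type*} [CommMonoid M] (c : Fin m → ZMod 2) (x y : M) :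
    x ^ wt c * y ^ (m - wt c) = ∏ i, if c i = 0 then y else x := by
  have hcompl : (Finset.univ.filter fun i => c i = 0).card = m - wt c := by
    have h := Finset.card_filter_add_card_filter_not (s := Finset.univ) (p := fun i => c i ≠ 0)
    simp only [Finset.card_univ, Fintype.card_fin] at h
    rw [wt]
    simp only [ne_eq, not_not] at h ⊢
    omega
  rw [Finset.prod_ite, Finset.prod_const, Finset.prod_const, hcompl, mul_comm]
  rfl

lemma sum_signChar_dotProduct_mul_pow_wt (c : Fin m → ZMod 2) (x y : ℤ) :
    ∑ v : Fin m → ZMod 2, signChar (c ⬝ᵥ v) * (x ^ wt v * y ^ (m - wt v)) =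
      (y - x) ^ wt c * (y + x) ^ (m - wt c) := by
  have hfactor : ∀ v : Fin m → ZMod 2, signChar (c ⬝ᵥ v) * (x ^ wt v * y ^ (m - wt v)) =
      ∏ i, signChar (c i * v i) * (if v i = 0 then y else x) := by
    intro v
    rw [pow_wt_mul_pow_sub_wt, dotProduct, AddChar.map_sum_eq_prod, ← Finset.prod_mul_distrib]
  rw [Fintype.sum_congr _ _ hfactor,
    ← Fintype.prod_sum fun i t => signChar (c i * t) * if t = 0 then y else x,
    pow_wt_mul_pow_sub_wt]
  simp only [sum_signChar_mul_mul_ite]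

lemma sum_pow_wt_mul_pow_sub_wt (m : ℕ) (x y : ℤ) :
    ∑ v : Fin m → ZMod 2, x ^ wt v * y ^ (m - wt v) = (x + y) ^ m := by
  simpa [wt, add_comm] using sum_signChar_dotProduct_mul_pow_wt (0 : Fin m → ZMod 2) x y

theorem card_mul_WE_dualCode (C : Submodule (ZMod 2) (Fin m → ZMod 2)) (x y : ℤ) :
    (Fintype.card C : ℤ) * WE (dualCode C) x y = WE C (y - x) (y + x) := by
  calc (Fintype.card C : ℤ) * WE (dualCode C) x y
      = ∑ v, (if v ∈ dualCode C then (Fintype.card C : ℤ) else 0) *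
          (x ^ wt v * y ^ (m - wt v)) := by
        simp only [ite_mul, zero_mul]
        rw [← Finset.sum_filter, Finset.sum_subtype (p := (· ∈ dualCode C)) _ (by simp), WE,
          Finset.mul_sum]
    _ = ∑ v, (∑ c : C, signChar ((c : Fin m → ZMod 2) ⬝ᵥ v)) *
          (x ^ wt v * y ^ (m - wt v)) := by
        simp only [sum_signChar_dotProduct_eq_ite]
    _ = WE C (y - x) (y + x) := by
        simp only [WE, ← sum_signChar_dotProduct_mul_pow_wt, Finset.sum_mul]
        exact Finset.sum_comm

lemma pow_finrank_dualCode_mul_WE (C : Submodule (ZMod 2) (Fin m → ZMod 2)) (x y : ℤ) :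
    2 ^ Module.finrank (ZMod 2) (dualCode C) * WE C x y = WE (dualCode C) (y - x) (y + x) := by
  have h := card_mul_WE_dualCode (dualCode C) x y
  rwa [dualCode_dualCode, Module.card_eq_pow_finrank (K := ZMod 2), ZMod.card, Nat.cast_pow,
    Nat.cast_ofNat] at h

lemma wt_le (c : Fin m → ZMod 2) : wt c ≤ m :=
  (Finset.card_le_univ _).trans_eq (Fintype.card_fin m)

lemma WE_mul_mul (C : Submodule (ZMod 2) (Fin m → ZMod 2)) (t x y : ℤ) :
    WE C (t * x) (t * y) = t ^ m * WE C x y := by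
  rw [WE, WE, Finset.mul_sum]
  refine Finset.sum_congr rfl fun c _ => ?_
  have ht : t ^ wt (c : Fin m → ZMod 2) * t ^ (m - wt (c : Fin m → ZMod 2)) = t ^ m := by
    rw [← pow_add, Nat.add_sub_cancel' (wt_le _)]
  rw [mul_pow, mul_pow, ← ht]
  ring

lemma WE_pos (C : Submodule (ZMod 2) (Fin m → ZMod 2)) {x y : ℤ} (hx : 0 < x)
    (hy : 0 < y) : 0 < WE C x y :=
  Finset.sum_pos (fun _ _ => by positivity) Finset.univ_nonempty

lemma WE_le_add_pow (C : Submodule (ZMod 2) (Fin m → ZMod 2)) {x y : ℤ} (hx : 0 ≤ x)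
    (hy : 0 ≤ y) : WE C x y ≤ (x + y) ^ m := by
  calc WE C x y = ∑ v ∈ Finset.univ.filter (· ∈ C), x ^ wt v * y ^ (m - wt v) := by
        rw [WE, Finset.sum_subtype (p := (· ∈ C)) _ (by simp)]
    _ ≤ ∑ v, x ^ wt v * y ^ (m - wt v) :=
        Finset.sum_le_univ_sum_of_nonneg fun _ => by positivity
    _ = (x + y) ^ m := sum_pow_wt_mul_pow_sub_wt m x y

lemma WE_eq_pow_mul_WE_dualCode_div (C : Submodule (ZMod 2) (Fin m → ZMod 2))
    {x y g : ℤ} (hgx : g ∣ y - x) (hgy : g ∣ y + x) :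
    WE C x y = g ^ m * WE (dualCode C) ((y - x) / g) ((y + x) / g) /
      2 ^ Module.finrank (ZMod 2) (dualCode C) := by
  rw [← WE_mul_mul, Int.mul_ediv_cancel' hgx, Int.mul_ediv_cancel' hgy,
    ← pow_finrank_dualCode_mul_WE, Int.mul_ediv_cancel_left _ (by positivity)]

lemma WE_mem_image (C : Submodule (ZMod 2) (Fin m → ZMod 2)) {x y g : ℤ} (hxy : |x| < y)
    (hg : 0 ≤ g) (hgx : g ∣ y - x) (hgy : g ∣ y + x) :
    WE C x y ∈ (fun p : ℕ × ℤ => g ^ m * p.2 / 2 ^ p.1) ''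
      ↑(Finset.range (m + 1) ×ˢ Finset.Icc 1 (((y - x) / g + (y + x) / g) ^ m)) := by
  refine ⟨(Module.finrank (ZMod 2) (dualCode C), WE (dualCode C) ((y - x) / g) ((y + x) / g)),
    ?_, (WE_eq_pow_mul_WE_dualCode_div C hgx hgy).symm⟩
  have hdim := (Submodule.finrank_le (dualCode C)).trans_eq (Module.finrank_fin_fun (ZMod 2))
  have hu : 0 < (y - x) / g :=
    Int.ediv_pos_of_pos_of_dvd (by linarith [le_abs_self x]) hg hgx
  have hw : 0 < (y + x) / g :=
    Int.ediv_pos_of_pos_of_dvd (by linarith [neg_abs_le x]) hg hgy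
  simp only [Finset.coe_product, Set.mem_prod, Finset.coe_range, Set.mem_Iio, Finset.coe_Icc,
    Set.mem_Icc]
  exact ⟨by omega, WE_pos _ hu hw, WE_le_add_pow _ hu.le hw.le⟩

end WeightEnumerator

theorem count_weight_enum_values_dual_general (a b : ℤ) (hb : |a| < b) (ℓ : ℕ) :
    {v : ℤ | ∃ C : Submodule (ZMod 2) (Fin ℓ → ZMod 2), v = WE C a b}.ncard
      ≤ (ℓ + 1) * ((2 * b).toNat / Int.gcd (b - a) (b + a)) ^ ℓ := by
  set g := Int.gcd (b - a) (b + a)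
  have hgu : (g : ℤ) ∣ b - a := Int.gcd_dvd_left ..
  have hgw : (g : ℤ) ∣ b + a := Int.gcd_dvd_right ..
  have hq : (((2 * b).toNat / g : ℕ) : ℤ) = (b - a) / g + (b + a) / g := by
    rw [Int.natCast_div, Int.toNat_of_nonneg (by linarith [abs_nonneg a]),
      ← Int.add_ediv_of_dvd_right hgw]
    ring_nf
  calc _ ≤ (Finset.range (ℓ + 1) ×ˢ Finset.Icc 1 (((b - a) / g + (b + a) / g) ^ ℓ)).card :=
        Set.ncard_le_card_of_subset_image <| by
          rintro _ ⟨C, rfl⟩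
          exact WE_mem_image C hb (Nat.cast_nonneg g) hgu hgw
    _ = _ := by
        simp only [Finset.card_product, Finset.card_range, Int.card_Icc, add_sub_cancel_right,
          ← hq, ← Nat.cast_pow, Int.toNat_natCast]

/-- For integers `a, b` with `b > |a|` and `ℓ ≥ 1`, the number of distinct values
`W_C(a,b)` over binary linear codes `C` of length `ℓ` is at most
`(ℓ+1) · (2b / gcd(b-a, b+a))^ℓ`. -/
theorem count_weight_enum_values_dual (a b : ℤ) (hb : |a| < b) (ℓ : ℕ) (hl : 1 ≤ ℓ) :
    {v : ℤ | ∃ C : Submodule (ZMod 2) (Fin ℓ → ZMod 2), v = WE C a b}.ncard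
      ≤ (ℓ + 1) * ((2 * b).toNat / Int.gcd (b - a) (b + a)) ^ ℓ :=
  count_weight_enum_values_dual_general a b hb ℓ
end

section
/- The matrices M_a = [[9,0],[0,1]] and M_b = [[10,6],[6,10]] generate a free subgroup of GL_2(ℚ) of rank two; equivalently, no nontrivial reduced word in M_a, M_b and their inverses equals the identity matrix. -/
/-- `M_a = [[9,0],[0,1]]` as an element of `GL₂(ℚ)`. -/
noncomputable def Ma : GL (Fin 2) ℚ :=
  Matrix.GeneralLinearGroup.mkOfDetNeZero !![9, 0; 0, 1]
    (by simp [Matrix.det_fin_two_of])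

/-- `M_b = [[10,6],[6,10]]` as an element of `GL₂(ℚ)`. -/
noncomputable def Mb : GL (Fin 2) ℚ :=
  Matrix.GeneralLinearGroup.mkOfDetNeZero !![10, 6; 6, 10]
    (by norm_num [Matrix.det_fin_two_of])

/-! Auxiliary: ping-pong on nonzero vectors of `ℚ²`. -/

abbrev PV : Type := {v : Fin 2 → ℚ // v ≠ 0}

noncomputable instance : SMul (GL (Fin 2) ℚ) PV where
  smul g v := ⟨(g : Matrix (Fin 2) (Fin 2) ℚ).mulVec v.1, by
    intro h
    apply v.2
    have h2 := congrArg ((g⁻¹ : GL (Fin 2) ℚ) : Matrix (Fin 2) (Fin 2) ℚ).mulVec h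
    rwa [Matrix.mulVec_mulVec, ← Units.val_mul, inv_mul_cancel, Units.val_one,
      Matrix.one_mulVec, Matrix.mulVec_zero] at h2⟩

theorem PV.smul_def (g : GL (Fin 2) ℚ) (v : PV) :
    (g • v).1 = (g : Matrix (Fin 2) (Fin 2) ℚ).mulVec v.1 := rfl

noncomputable instance : MulAction (GL (Fin 2) ℚ) PV where
  one_smul v := Subtype.ext (by
    show ((1 : GL (Fin 2) ℚ) : Matrix (Fin 2) (Fin 2) ℚ).mulVec v.1 = v.1
    rw [Units.val_one, Matrix.one_mulVec])
  mul_smul g h v := Subtype.ext (by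
    show ((g * h : GL (Fin 2) ℚ) : Matrix (Fin 2) (Fin 2) ℚ).mulVec v.1 = _
    rw [Units.val_mul, ← Matrix.mulVec_mulVec]
    rfl)

/-- attracting set of `Ma` : slope `t ≥ 3`, `t < -3` or `∞`. -/
def Xa : Set PV :=
  {v | v.1 1 = 0 ∨ 0 ≤ v.1 1 * (v.1 0 - 3 * v.1 1) ∨ v.1 1 * (v.1 0 + 3 * v.1 1) < 0}

/-- repelling set of `Ma` : slope `-1/3 ≤ t < 1/3`. -/
def Ya : Set PV :=
  {v | v.1 1 ≠ 0 ∧ 0 ≤ v.1 1 * (3 * v.1 0 + v.1 1) ∧ v.1 1 * (3 * v.1 0 - v.1 1) < 0}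

/-- attracting set of `Mb` : slope `1/3 ≤ t < 3`. -/
def Xb : Set PV :=
  {v | v.1 1 ≠ 0 ∧ 0 ≤ v.1 1 * (3 * v.1 0 - v.1 1) ∧ v.1 1 * (v.1 0 - 3 * v.1 1) < 0}

/-- repelling set of `Mb` : slope `-3 ≤ t < -1/3`. -/
def Yb : Set PV :=
  {v | v.1 1 ≠ 0 ∧ 0 ≤ v.1 1 * (v.1 0 + 3 * v.1 1) ∧ v.1 1 * (3 * v.1 0 + v.1 1) < 0}

theorem keyA (v : PV) (hv : v ∉ Ya) : Ma • v ∈ Xa := by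
  obtain ⟨w, hw⟩ := v
  have hco : ((Ma : GL (Fin 2) ℚ) : Matrix (Fin 2) (Fin 2) ℚ) = !![9,0;0,1] := rfl
  have hMa : (Ma • (⟨w, hw⟩ : PV)).1 = ![9 * w 0, w 1] := by
    rw [PV.smul_def, hco]
    funext i
    fin_cases i <;> simp [Matrix.mulVec, dotProduct, Fin.sum_univ_two]
  simp only [Ya, Set.mem_setOf_eq, not_and_or, not_lt, not_le, not_not] at hv
  simp only [Xa, Set.mem_setOf_eq, hMa, Matrix.cons_val_zero, Matrix.cons_val_one, Matrix.head_cons]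
  set x := w 0
  set y := w 1
  rcases hv with h | h | h
  · left; simpa using h
  · right; right; nlinarith
  · right; left; nlinarith

theorem keyB (v : PV) (hv : v ∉ Yb) : Mb • v ∈ Xb := by
  obtain ⟨w, hw⟩ := v
  have hco : ((Mb : GL (Fin 2) ℚ) : Matrix (Fin 2) (Fin 2) ℚ) = !![10,6;6,10] := rfl
  have hMb : (Mb • (⟨w, hw⟩ : PV)).1 = ![10 * w 0 + 6 * w 1, 6 * w 0 + 10 * w 1] := by
    rw [PV.smul_def, hco]
    funext i
    fin_cases i <;> simp [Matrix.mulVec, dotProduct, Fin.sum_univ_two]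
  simp only [Yb, Set.mem_setOf_eq, not_and_or, not_lt, not_le, not_not] at hv
  simp only [Xb, Set.mem_setOf_eq, hMb, Matrix.cons_val_zero, Matrix.cons_val_one, Matrix.head_cons]
  set x := w 0 with hx
  set y := w 1 with hy
  have hxy : x ≠ 0 ∨ y ≠ 0 := by
    by_contra h
    push_neg at h
    exact hw (funext fun i => by fin_cases i <;> simp [hx ▸ h.1, hy ▸ h.2])
  rcases eq_or_ne y 0 with h0 | h0
  · -- y = 0, x ≠ 0
    have hx0 : x ≠ 0 := hxy.resolve_right (fun h => h h0)
    have hx2 : 0 < x * x := mul_self_pos.mpr hx0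
    refine ⟨by rw [h0]; simpa using hx0, by rw [h0]; nlinarith, by rw [h0]; nlinarith⟩
  · have hy2 : 0 < y * y := mul_self_pos.mpr h0
    rcases hv with h | h | h
    · exact absurd h h0
    · -- y * (x + 3 * y) < 0 : slope t < -3
      rcases lt_or_gt_of_ne h0 with hyn | hyp
      · -- y < 0 : x + 3y > 0
        have h1 : 0 < x + 3 * y := by nlinarith
        have h6 : 0 < 6 * x + 10 * y := by linarith
        have h24 : 0 < 24 * x + 8 * y := by linarith
        refine ⟨by positivity, by nlinarith, by nlinarith⟩
      · -- y > 0 : x + 3y < 0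
        have h1 : x + 3 * y < 0 := by nlinarith
        have h6 : 6 * x + 10 * y < 0 := by linarith
        have h24 : 24 * x + 8 * y < 0 := by linarith
        refine ⟨by intro hq; rw [hq] at h6; exact absurd h6 (lt_irrefl 0), by nlinarith,
          by nlinarith⟩
    · -- 0 ≤ y * (3x + y) : slope t ≥ -1/3
      rcases lt_or_gt_of_ne h0 with hyn | hyp
      · -- y < 0 : 3x + y ≤ 0
        have h1 : 3 * x + y ≤ 0 := by nlinarith
        have h6 : 6 * x + 10 * y < 0 := by linarith
        have h24 : 24 * x + 8 * y ≤ 0 := by linarith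
        refine ⟨by intro hq; rw [hq] at h6; exact absurd h6 (lt_irrefl 0), by nlinarith,
          by nlinarith⟩
      · -- y > 0 : 3x + y ≥ 0
        have h1 : 0 ≤ 3 * x + y := by nlinarith
        have h6 : 0 < 6 * x + 10 * y := by linarith
        have h24 : 0 ≤ 24 * x + 8 * y := by linarith
        refine ⟨by positivity, by nlinarith, by nlinarith⟩


theorem sq_pos_of_ne {y : ℚ} (h : y ≠ 0) : 0 < y * y := mul_self_pos.mpr h

theorem disjXaXb : Disjoint Xa Xb := by
  rw [Set.disjoint_left]
  rintro v (h | h | h) ⟨hy, h2, h4⟩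
  · exact hy h
  · exact absurd h (not_le.mpr h4)
  · nlinarith [sq_pos_of_ne hy]

theorem disjXaYa : Disjoint Xa Ya := by
  rw [Set.disjoint_left]
  rintro v (h | h | h) ⟨hy, h1, h2⟩
  · exact hy h
  · nlinarith [sq_pos_of_ne hy]
  · nlinarith [sq_pos_of_ne hy]

theorem disjXaYb : Disjoint Xa Yb := by
  rw [Set.disjoint_left]
  rintro v (h | h | h) ⟨hy, h3, h1⟩
  · exact hy h
  · nlinarith [sq_pos_of_ne hy]
  · exact absurd h3 (not_le.mpr h)

theorem disjXbYa : Disjoint Xb Ya := by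
  rw [Set.disjoint_left]
  rintro v ⟨hy, h2, h4⟩ ⟨hy', h1, h2'⟩
  exact absurd h2 (not_le.mpr h2')

theorem disjXbYb : Disjoint Xb Yb := by
  rw [Set.disjoint_left]
  rintro v ⟨hy, h2, h4⟩ ⟨hy', h3, h1⟩
  nlinarith [sq_pos_of_ne hy]

theorem disjYaYb : Disjoint Ya Yb := by
  rw [Set.disjoint_left]
  rintro v ⟨hy, h1, h2⟩ ⟨hy', h3, h1'⟩
  exact absurd h1 (not_le.mpr h1')

/-- `M_a` and `M_b` generate a free subgroup of `GL₂(ℚ)` of rank two: the natural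
homomorphism from the free group on two generators sending them to `M_a`, `M_b`
is injective, so no nontrivial reduced word in them equals the identity. -/
theorem Ma_Mb_free :
    Function.Injective (FreeGroup.lift (fun b : Bool => if b then Ma else Mb)) := by
  have e1 : (![1, 0] : Fin 2 → ℚ) ≠ 0 := by
    intro h; simpa using congrFun h 0
  have e2 : (![1, 1] : Fin 2 → ℚ) ≠ 0 := by
    intro h; simpa using congrFun h 0
  apply FreeGroup.injective_lift_of_ping_pong (α := PV) _
    (fun i => if i then Xa else Xb) (fun i => if i then Ya else Yb)
  · intro i
    cases i
    · exact ⟨⟨![1, 1], e2⟩, by norm_num [Xb]⟩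
    · exact ⟨⟨![1, 0], e1⟩, by norm_num [Xa]⟩
  · intro i j hij
    cases i <;> cases j <;> simp_all
    · exact disjXaXb.symm
    · exact disjXaXb
  · intro i j hij
    cases i <;> cases j <;> simp_all
    · exact disjYaYb.symm
    · exact disjYaYb
  · intro i j
    cases i <;> cases j
    exacts [disjXbYb, disjXbYa, disjXaYb, disjXaYa]
  · intro i
    rintro _ ⟨v, hv, rfl⟩
    cases i
    · exact keyB v hv
    · exact keyA v hv
  · intro i
    rintro _ ⟨v, hv, rfl⟩
    cases i
    · show Mb⁻¹ • v ∈ Yb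
      by_contra h
      have h2 := keyB _ h
      rw [smul_inv_smul] at h2
      exact hv h2
    · show Ma⁻¹ • v ∈ Ya
      by_contra h
      have h2 := keyA _ h
      rw [smul_inv_smul] at h2
      exact hv h2
end

section
/- Let M_b = [[10,6],[6,10]] and let v = (x,y)^T ∈ ℚ^2 with x,y ≠ 0 and either |y|/|x| < 1/3 or |y|/|x| > 3. Then for every nonzero integer m, the vector M_b^m v = (x',y')^T satisfies x',y' ≠ 0, and 1/3 < y'/x' < 3 if m ≥ 1, while −3 < y'/x' < −1/3 if m ≤ −1. -/
open Matrix

theorem Matrix.GeneralLinearGroup.vecMul_zpow_of_vecMul_eq_smul {n K : Type*} [Fintype n]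
    [DecidableEq n] [Field K] {A : GL n K} {u : n → K} {c : K} (hc : c ≠ 0)
    (hu : u ᵥ* A.val = c • u) (m : ℤ) :
    u ᵥ* (A ^ m).val = c ^ m • u := by
  have hinv : u ᵥ* A⁻¹.val = c⁻¹ • u := by
    calc u ᵥ* A⁻¹.val
        = c⁻¹ • (u ᵥ* A.val) ᵥ* A⁻¹.val := by
          rw [hu, smul_vecMul, smul_smul, inv_mul_cancel₀ hc, one_smul]
      _ = c⁻¹ • u := by
          rw [vecMul_vecMul, ← Units.val_mul, mul_inv_cancel, Units.val_one, vecMul_one]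
  induction m using Int.induction_on with
  | zero => simp
  | succ k ih =>
    rw [_root_.zpow_add_one, Units.val_mul, ← vecMul_vecMul, ih, smul_vecMul, hu, smul_smul,
      zpow_add_one₀ hc]
  | pred k ih =>
    rw [_root_.zpow_sub_one, Units.val_mul, ← vecMul_vecMul, ih, smul_vecMul, hinv, smul_smul,
      zpow_sub_one₀ hc]

theorem Matrix.GeneralLinearGroup.dotProduct_zpow_mulVec_of_vecMul_eq_smul {n K : Type*}
    [Fintype n] [DecidableEq n] [Field K] {A : GL n K} {u : n → K} {c : K} (hc : c ≠ 0)
    (hu : u ᵥ* A.val = c • u) (m : ℤ) (v : n → K) :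
    u ⬝ᵥ ((A ^ m).val *ᵥ v) = c ^ m * (u ⬝ᵥ v) := by
  rw [dotProduct_mulVec, vecMul_zpow_of_vecMul_eq_smul hc hu, smul_dotProduct, smul_eq_mul]

theorem Mb_zpow_mulVec_add (m : ℤ) (v : Fin 2 → ℚ) :
    ((Mb ^ m).val *ᵥ v) 0 + ((Mb ^ m).val *ᵥ v) 1 = (16 : ℚ) ^ m * (v 0 + v 1) := by
  have hu : ![1, 1] ᵥ* Mb.val = (16 : ℚ) • ![1, 1] := by
    ext i; fin_cases i <;> norm_num [Mb, vecMul, dotProduct, Fin.sum_univ_two]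
  simpa only [dotProduct, Fin.sum_univ_two, cons_val_zero, cons_val_one, one_mul] using
    GeneralLinearGroup.dotProduct_zpow_mulVec_of_vecMul_eq_smul (by norm_num) hu m v

theorem Mb_zpow_mulVec_sub (m : ℤ) (v : Fin 2 → ℚ) :
    ((Mb ^ m).val *ᵥ v) 0 - ((Mb ^ m).val *ᵥ v) 1 = (4 : ℚ) ^ m * (v 0 - v 1) := by
  have hu : ![1, -1] ᵥ* Mb.val = (4 : ℚ) • ![1, -1] := by
    ext i; fin_cases i <;> norm_num [Mb, vecMul, dotProduct, Fin.sum_univ_two]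
  simpa only [dotProduct, Fin.sum_univ_two, cons_val_zero, cons_val_one, one_mul, neg_one_mul,
    ← sub_eq_add_neg] using
    GeneralLinearGroup.dotProduct_zpow_mulVec_of_vecMul_eq_smul (by norm_num) hu m v

section
variable {K : Type*} [Field K] [LinearOrder K] [IsStrictOrderedRing K]

theorem abs_sub_lt_two_mul_abs_add {x y : K} (hx : x ≠ 0)
    (h : |y| / |x| < 1 / 3 ∨ 3 < |y| / |x|) : |x - y| < 2 * |x + y| := by
  have hx' : 0 < |x| := abs_pos.2 hx
  have hsub : |x - y| ≤ |x| + |y| := abs_sub x y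
  have hadd₁ : |x| - |y| ≤ |x + y| := by simpa using abs_sub_abs_le_abs_sub x (-y)
  have hadd₂ : |y| - |x| ≤ |x + y| := by simpa [add_comm] using abs_sub_abs_le_abs_sub y (-x)
  rcases h with h | h
  · rw [div_lt_iff₀ hx'] at h; linarith
  · rw [lt_div_iff₀ hx'] at h; linarith

theorem div_mem_Ioo_of_two_mul_abs_sub_lt_abs_add {x y : K} (h : 2 * |x - y| < |x + y|) :
    x ≠ 0 ∧ y ≠ 0 ∧ 1 / 3 < y / x ∧ y / x < 3 := by
  have hx : x ≠ 0 := by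
    rintro rfl; simp only [zero_sub, abs_neg, zero_add] at h; linarith [abs_nonneg y]
  have hy : y ≠ 0 := by
    rintro rfl; simp only [sub_zero, add_zero] at h; linarith [abs_nonneg x]
  -- `(2 (x - y))² < (x + y)²` factors as `(3x - y)(x - 3y) < 0`.
  have hquad : (3 * x - y) * (x - 3 * y) < 0 := by
    have := sq_lt_sq.2 (show |2 * (x - y)| < |x + y| by rwa [abs_mul, abs_two])
    nlinarith
  have hratio : (3 - y / x) * (1 - 3 * (y / x)) < 0 := by
    have hx2 : 0 < x ^ 2 := by positivity
    refine neg_of_mul_neg_right ?_ hx2.le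
    convert hquad using 1
    field_simp
  rcases mul_neg_iff.1 hratio with ⟨h₁, h₂⟩ | ⟨h₁, h₂⟩
  · exact ⟨hx, hy, by linarith, by linarith⟩
  · exact absurd h₁ (by linarith)

theorem div_mem_Ioo_neg_of_two_mul_abs_add_lt_abs_sub {x y : K} (h : 2 * |x + y| < |x - y|) :
    x ≠ 0 ∧ y ≠ 0 ∧ -3 < y / x ∧ y / x < -(1 / 3) := by
  obtain ⟨hx, hy, h₁, h₂⟩ :=
    div_mem_Ioo_of_two_mul_abs_sub_lt_abs_add (x := x) (y := -y) (by simpa [← sub_eq_add_neg])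
  rw [neg_div] at h₁ h₂
  exact ⟨hx, neg_ne_zero.1 hy, by linarith, by linarith⟩

theorem two_mul_abs_mul_lt_abs_mul {a b μ ν : K} (hμ : 0 < μ) (hμν : 4 * μ ≤ ν)
    (h : |a| < 2 * |b|) : 2 * |μ * a| < |ν * b| := by
  have hν : 0 < ν := by linarith
  rw [abs_mul, abs_mul, abs_of_pos hμ, abs_of_pos hν]
  nlinarith [abs_nonneg b]

end

theorem four_mul_four_zpow_le_sixteen_zpow {m : ℤ} (hm : 1 ≤ m) : 4 * (4 : ℚ) ^ m ≤ 16 ^ m := by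
  have h4 : (4 : ℚ) ≤ 4 ^ m := by
    simpa using zpow_le_zpow_right₀ (show (1 : ℚ) ≤ 4 by norm_num) hm
  rw [show (16 : ℚ) = 4 * 4 by norm_num, mul_zpow]
  exact mul_le_mul_of_nonneg_right h4 (by positivity)

theorem four_mul_sixteen_zpow_le_four_zpow {m : ℤ} (hm : m ≤ -1) : 4 * (16 : ℚ) ^ m ≤ 4 ^ m := by
  have h4 : (4 : ℚ) ^ m ≤ 4⁻¹ := by
    simpa using zpow_le_zpow_right₀ (show (1 : ℚ) ≤ 4 by norm_num) hm
  rw [show (16 : ℚ) = 4 * 4 by norm_num, mul_zpow, ← mul_assoc]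
  calc 4 * 4 ^ m * (4 : ℚ) ^ m ≤ 4 * 4⁻¹ * 4 ^ m := by gcongr
    _ = 4 ^ m := by norm_num

theorem Mb_power_pingpong_general (x y : ℚ) (hx : x ≠ 0)
    (h : |y| / |x| < 1 / 3 ∨ 3 < |y| / |x|) (m : ℤ) (hm : m ≠ 0) :
    ∀ x' y' : ℚ,
      x' = ((Mb ^ m : GL (Fin 2) ℚ) : Matrix (Fin 2) (Fin 2) ℚ).mulVec ![x, y] 0 →
      y' = ((Mb ^ m : GL (Fin 2) ℚ) : Matrix (Fin 2) (Fin 2) ℚ).mulVec ![x, y] 1 →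
      x' ≠ 0 ∧ y' ≠ 0 ∧
        (1 ≤ m → 1 / 3 < y' / x' ∧ y' / x' < 3) ∧
        (m ≤ -1 → -3 < y' / x' ∧ y' / x' < -(1 / 3)) := by
  rintro x' y' rfl rfl
  have hadd := Mb_zpow_mulVec_add m ![x, y]
  have hsub := Mb_zpow_mulVec_sub m ![x, y]
  simp only [cons_val_zero, cons_val_one] at hadd hsub
  have hxy : |x - y| < 2 * |x + y| := abs_sub_lt_two_mul_abs_add hx h
  have hyx : |x + y| < 2 * |x - y| := by
    simpa [← sub_eq_add_neg] using abs_sub_lt_two_mul_abs_add (y := -y) hx (by rwa [abs_neg])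
  rcases hm.lt_or_gt with hneg | hpos
  · obtain ⟨hx', hy', hratio⟩ := div_mem_Ioo_neg_of_two_mul_abs_add_lt_abs_sub <| by
      rw [hadd, hsub]
      exact two_mul_abs_mul_lt_abs_mul (by positivity)
        (four_mul_sixteen_zpow_le_four_zpow (by omega)) hyx
    exact ⟨hx', hy', fun _ => by omega, fun _ => hratio⟩
  · obtain ⟨hx', hy', hratio⟩ := div_mem_Ioo_of_two_mul_abs_sub_lt_abs_add <| by
      rw [hadd, hsub]
      exact two_mul_abs_mul_lt_abs_mul (by positivity)
        (four_mul_four_zpow_le_sixteen_zpow (by omega)) hxy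
    exact ⟨hx', hy', fun _ => hratio, fun _ => by omega⟩

/-- If `x, y ≠ 0` and `|y|/|x| < 1/3` or `|y|/|x| > 3`, then for every nonzero integer
`m`, writing `(x', y')ᵀ = M_bᵐ (x, y)ᵀ`, we have `x', y' ≠ 0`, with
`1/3 < y'/x' < 3` if `m ≥ 1` and `-3 < y'/x' < -1/3` if `m ≤ -1`. -/
theorem Mb_power_pingpong (x y : ℚ) (hx : x ≠ 0) (hy : y ≠ 0)
    (h : |y| / |x| < 1 / 3 ∨ 3 < |y| / |x|) (m : ℤ) (hm : m ≠ 0) :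
    ∀ x' y' : ℚ,
      x' = ((Mb ^ m : GL (Fin 2) ℚ) : Matrix (Fin 2) (Fin 2) ℚ).mulVec ![x, y] 0 →
      y' = ((Mb ^ m : GL (Fin 2) ℚ) : Matrix (Fin 2) (Fin 2) ℚ).mulVec ![x, y] 1 →
      x' ≠ 0 ∧ y' ≠ 0 ∧
        (1 ≤ m → 1 / 3 < y' / x' ∧ y' / x' < 3) ∧
        (m ≤ -1 → -3 < y' / x' ∧ y' / x' < -(1 / 3)) :=
  Mb_power_pingpong_general x y hx h m hm
end
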